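/- arXiv:2301.11255 — 9 statements merged into one kernel-verified Lean document; each statement's English description precedes it below -/
import Mathlib

section
/- Let F be a finite subset of Z^d contained in the box B_{n0} = {-n0,...,n0}^d, and let f : Z^d → R be a bounded function with 1_F * f = 1 (i.e., for every x in Z^d, the sum over y in F of f(x - y) equals 1). Then f has mean 1/|F|, that is, lim_{n→∞} (1/|B_n|) · Σ_{v ∈ B_n} f(v) = 1/|F|, where B_n = {-n,...,n}^d. -/
open Finset Filter Topology

/-!
Summing the tiling identity `∑_{y ∈ F} f (x - y) = 1` over the cube `B_n` gives
`∑_{y ∈ F} ∑_{v ∈ B_n - y} f v = |B_n|`. Every translate `B_n - y` with `y ∈ F ⊆ B_{n₀}` contains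
`B_{n - n₀}`, so for bounded `f` the sum of `f` over `B_n - y` differs from its sum over `B_n` by
`O(|B_n| - |B_{n - n₀}|) = o(|B_n|)`. Hence `|F| ∑_{B_n} f = |B_n| + o(|B_n|)`.
-/

section Tiling

lemma abs_sum_sub_sum_le_of_subset {ι : Type*} [DecidableEq ι] {A B : Finset ι} (hAB : A ⊆ B)
    {f : ι → ℝ} {C : ℝ} (hf : ∀ x, |f x| ≤ C) :
    |∑ x ∈ B, f x - ∑ x ∈ A, f x| ≤ (#B - #A : ℝ) * C := by
  rw [← sum_sdiff_eq_sub hAB, ← Nat.cast_sub (card_le_card hAB), ← card_sdiff_of_subset hAB,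
    ← nsmul_eq_mul]
  exact (abs_sum_le_sum_abs _ _).trans (sum_le_card_nsmul _ _ _ fun x _ => hf x)

lemma abs_sum_sub_sum_le_of_subset_of_card_eq {ι : Type*} [DecidableEq ι] {A B B' : Finset ι}
    (hAB : A ⊆ B) (hAB' : A ⊆ B') (hcard : #B' = #B) {f : ι → ℝ} {C : ℝ}
    (hf : ∀ x, |f x| ≤ C) :
    |∑ x ∈ B, f x - ∑ x ∈ B', f x| ≤ 2 * (#B - #A : ℝ) * C := by
  have hB := abs_sum_sub_sum_le_of_subset hAB hf
  have hB' := abs_sum_sub_sum_le_of_subset hAB' hf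
  rw [hcard, abs_sub_comm] at hB'
  linarith [abs_sub_le (∑ x ∈ B, f x) (∑ x ∈ A, f x) (∑ x ∈ B', f x)]

variable {G : Type*} [AddCommGroup G] [DecidableEq G] {F A B : Finset G} {f : G → ℝ} {C : ℝ}

lemma abs_card_mul_sum_sub_card_le (hf : ∀ x, |f x| ≤ C)
    (htile : ∀ x, ∑ y ∈ F, f (x - y) = 1) (hAB : A ⊆ B)
    (hAF : ∀ y ∈ F, A ⊆ B.map (Equiv.subRight y).toEmbedding) :
    |#F * ∑ x ∈ B, f x - #B| ≤ #F * (2 * (#B - #A : ℝ) * C) := by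
  have hcount : ∑ y ∈ F, ∑ v ∈ B.map (Equiv.subRight y).toEmbedding, f v = #B := by
    simp only [sum_map, Equiv.coe_toEmbedding, Equiv.subRight_apply]
    rw [sum_comm, sum_congr rfl fun x _ => htile x, sum_const, nsmul_one]
  have hsplit : #F * ∑ x ∈ B, f x - #B =
      ∑ y ∈ F, (∑ x ∈ B, f x - ∑ v ∈ B.map (Equiv.subRight y).toEmbedding, f v) := by
    rw [sum_sub_distrib, hcount, sum_const, nsmul_eq_mul]
  rw [hsplit, ← nsmul_eq_mul, ← sum_const]
  refine (abs_sum_le_sum_abs _ _).trans (sum_le_sum fun y hy => ?_)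
  exact abs_sum_sub_sum_le_of_subset_of_card_eq hAB (hAF y hy) (card_map _) hf

lemma abs_sum_div_card_sub_inv_card_le (hf : ∀ x, |f x| ≤ C)
    (htile : ∀ x, ∑ y ∈ F, f (x - y) = 1) (hF : F.Nonempty) (hB : B.Nonempty) (hAB : A ⊆ B)
    (hAF : ∀ y ∈ F, A ⊆ B.map (Equiv.subRight y).toEmbedding) :
    |(∑ x ∈ B, f x) / #B - 1 / #F| ≤ 2 * C * (1 - #A / #B) := by
  have hFpos : (0 : ℝ) < #F := by exact_mod_cast hF.card_pos
  have hBpos : (0 : ℝ) < #B := by exact_mod_cast hB.card_pos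
  have key := abs_card_mul_sum_sub_card_le hf htile hAB hAF
  have hdiv : (∑ x ∈ B, f x) / #B - 1 / #F = (#F * ∑ x ∈ B, f x - #B) / (#F * #B) := by
    field_simp
  rw [hdiv, abs_div, abs_of_pos (mul_pos hFpos hBpos), div_le_iff₀ (mul_pos hFpos hBpos)]
  refine key.trans_eq ?_
  field_simp

end Tiling

section Cube

noncomputable def cube (d n : ℕ) : Finset (Fin d → ℤ) := Icc (fun _ => -(n : ℤ)) (fun _ => n)

lemma card_cube (d n : ℕ) : #(cube d n) = (2 * n + 1) ^ d := by
  simp only [cube, Pi.card_Icc, Int.card_Icc, prod_const, card_univ, Fintype.card_fin]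
  congr 1
  omega

lemma cube_nonempty (d n : ℕ) : (cube d n).Nonempty := by
  simp [← card_pos, card_cube]

lemma cube_mono {d m n : ℕ} (h : m ≤ n) : cube d m ⊆ cube d n :=
  Icc_subset_Icc (fun _ => by simp only; omega) (fun _ => by simp only; omega)

lemma cube_sub_subset_map_subRight {d m n : ℕ} (hmn : m ≤ n) {y : Fin d → ℤ}
    (hy : ∀ i, |y i| ≤ m) : cube d (n - m) ⊆ (cube d n).map (Equiv.subRight y).toEmbedding := by
  intro v hv
  simp only [cube, mem_map_equiv, Equiv.subRight_symm_apply, mem_Icc, Pi.le_def,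
    Pi.add_apply] at hv ⊢
  refine ⟨fun i => ?_, fun i => ?_⟩ <;>
  · have := abs_le.mp (hy i)
    have := hv.1 i
    have := hv.2 i
    omega

lemma tendsto_card_cube_sub_div_card_cube (d m : ℕ) :
    Tendsto (fun n => (#(cube d (n - m)) : ℝ) / #(cube d n)) atTop (𝓝 1) := by
  have hratio : Tendsto (fun n : ℕ => 1 - 2 * (m : ℝ) / (2 * n + 1)) atTop (𝓝 1) := by
    have hden : Tendsto (fun n : ℕ => 2 * (n : ℝ) + 1) atTop atTop :=
      tendsto_atTop_add_const_right _ 1 (tendsto_natCast_atTop_atTop.const_mul_atTop two_pos)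
    simpa using (tendsto_const_nhds.div_atTop hden).const_sub 1
  have hpow := hratio.pow d
  rw [one_pow] at hpow
  refine hpow.congr' ?_
  filter_upwards [eventually_ge_atTop m] with n hn
  simp only [card_cube, Nat.cast_pow, ← div_pow]
  congr 1
  field_simp
  push_cast [hn]
  ring

end Cube

theorem stmt_0 (d n0 : ℕ) (F : Finset (Fin d → ℤ))
    (hFbox : ∀ v ∈ F, ∀ i, |v i| ≤ (n0 : ℤ))
    (f : (Fin d → ℤ) → ℝ) (C : ℝ) (hbd : ∀ x, |f x| ≤ C)
    (htile : ∀ x, ∑ y ∈ F, f (x - y) = 1) :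
    Tendsto
      (fun n : ℕ =>
        (∑ v ∈ Finset.Icc (fun _ : Fin d => -(n : ℤ)) (fun _ => (n : ℤ)), f v) /
          ((Finset.Icc (fun _ : Fin d => -(n : ℤ)) (fun _ => (n : ℤ))).card : ℝ))
      atTop (nhds (1 / (F.card : ℝ))) := by
  have hF : F.Nonempty := nonempty_of_sum_ne_zero (by rw [htile 0]; exact one_ne_zero)
  have hbound : ∀ᶠ n in atTop,
      |(∑ v ∈ cube d n, f v) / #(cube d n) - 1 / #F| ≤
        2 * C * (1 - #(cube d (n - n0)) / #(cube d n)) := by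
    filter_upwards [eventually_ge_atTop n0] with n hn
    exact abs_sum_div_card_sub_inv_card_le hbd htile hF (cube_nonempty d n)
      (cube_mono (Nat.sub_le n n0)) fun y hy => cube_sub_subset_map_subRight hn (hFbox y hy)
  have herror : Tendsto (fun n => 2 * C * (1 - #(cube d (n - n0)) / #(cube d n) : ℝ)) atTop
      (𝓝 0) := by
    simpa using ((tendsto_card_cube_sub_div_card_cube d n0).const_sub 1).const_mul (2 * C)
  exact tendsto_sub_nhds_zero_iff.mp (squeeze_zero_norm' hbound herror)
end

section
/- Let F1, F2 be finite subsets of Z^d and let f : Z^d → R be a bounded function such that 1_{F1} * f = 1 and 1_{F2} * f = 1. Then |F1| = |F2|. -/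
theorem stmt_1 (d : ℕ) (F1 F2 : Finset (Fin d → ℤ))
    (f : (Fin d → ℤ) → ℝ) (C : ℝ) (hbd : ∀ x, |f x| ≤ C)
    (h1 : ∀ x, ∑ y ∈ F1, f (x - y) = 1)
    (h2 : ∀ x, ∑ y ∈ F2, f (x - y) = 1) :
    F1.card = F2.card := by
  have key : (F1.card : ℝ) = F2.card := by
    calc (F1.card : ℝ) = ∑ z ∈ F1, (1 : ℝ) := by simp
    _ = ∑ z ∈ F1, ∑ y ∈ F2, f ((0 - z) - y) := by
        refine Finset.sum_congr rfl fun z _ => ?_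
        rw [h2]
    _ = ∑ y ∈ F2, ∑ z ∈ F1, f ((0 - y) - z) := by
        rw [Finset.sum_comm]
        refine Finset.sum_congr rfl fun z _ => Finset.sum_congr rfl fun y _ => ?_
        rw [sub_right_comm]
    _ = ∑ y ∈ F2, (1 : ℝ) := by
        refine Finset.sum_congr rfl fun y _ => ?_
        rw [h1]
    _ = F2.card := by simp
  exact_mod_cast key
end

section
/- Every nonempty Z-subshift of finite type over a finite alphabet contains a periodic point, i.e., a point x with σ_n(x) = x for some nonzero integer n. -/
theorem stmt_3 (A : Type*) [Fintype A] (W : Finset ℤ) (Fbad : Set ({w // w ∈ W} → A))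
    (X : Set (ℤ → A))
    (hX : X = { x : ℤ → A | ∀ v : ℤ, (fun w : {w // w ∈ W} => x (v + w.1)) ∉ Fbad })
    (hne : X.Nonempty) :
    ∃ x ∈ X, ∃ n : ℤ, n ≠ 0 ∧ ∀ m : ℤ, x (n + m) = x m := by
  obtain ⟨x, hx⟩ := hne
  subst hX
  -- bound on the window
  set N' : ℕ := W.sup (fun w => w.natAbs) with hN'
  set N : ℤ := (N' : ℤ) with hN
  have hNnonneg : (0:ℤ) ≤ N := Int.natCast_nonneg _
  have hWbound : ∀ w ∈ W, -N ≤ w ∧ w ≤ N := by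
    intro w hw
    have : w.natAbs ≤ N' := Finset.le_sup (f := fun w => w.natAbs) hw
    simp only [hN]
    omega
  -- pigeonhole: two positions with equal (2N+1)-blocks
  have hfin : ∃ a b : ℤ, a < b ∧
      ∀ t : ℤ, -N ≤ t → t ≤ N → x (a + t) = x (b + t) := by
    set f : ℤ → (Fin (2*N'+1) → A) := fun v i => x (v + (i : ℤ) - N') with hf
    obtain ⟨v₁, v₂, hne, heq⟩ := Finite.exists_ne_map_eq_of_infinite f
    have key : ∀ a b : ℤ, f a = f b →
        ∀ t : ℤ, -N ≤ t → t ≤ N → x (a + t) = x (b + t) := by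
      intro a b hab t ht1 ht2
      have hlt : (t + N).toNat < 2*N'+1 := by
        have h0 : 0 ≤ t + N := by linarith
        have : t + N ≤ 2*N' := by omega
        omega
      have := congrFun hab ⟨(t + N).toNat, hlt⟩
      simp only [hf] at this
      have hcast : ((t + N).toNat : ℤ) = t + N := Int.toNat_of_nonneg (by linarith)
      rw [hcast] at this
      have e1 : a + (t + N) - N' = a + t := by rw [hN]; ring
      have e2 : b + (t + N) - N' = b + t := by rw [hN]; ring
      rwa [e1, e2] at this
    rcases lt_or_gt_of_ne hne with h | h
    · exact ⟨v₁, v₂, h, key v₁ v₂ heq⟩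
    · exact ⟨v₂, v₁, h, key v₂ v₁ heq.symm⟩
  obtain ⟨v₁, v₂, hlt, hper⟩ := hfin
  set n : ℤ := v₂ - v₁ with hn
  have hnpos : 0 < n := by omega
  -- local periodicity: x (v₁ + t) = x (v₁ + t + n) for t ∈ [-N, N]
  have hper' : ∀ t : ℤ, -N ≤ t → t ≤ N → x (v₁ + t) = x (v₁ + t + n) := by
    intro t h1 h2
    have := hper t h1 h2
    rw [this]; congr 1; rw [hn]; ring
  have hmodadd : ∀ a : ℤ, (a + n) % n = a % n := by
    intro a
    conv_lhs => rw [show a + n = a + 1 * n by ring]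
    rw [Int.add_mul_emod_self_right]
  have hmodsub : ∀ a : ℤ, (a - n) % n = a % n := by
    intro a
    conv_lhs => rw [show a - n = a + (-1) * n by ring]
    rw [Int.add_mul_emod_self_right]
  -- key lemma, upward direction
  have up : ∀ k : ℕ, ∀ t : ℤ, t.toNat = k → 0 ≤ t → t < n + N →
      x (v₁ + t) = x (v₁ + t % n) := by
    intro k
    induction k using Nat.strong_induction_on with
    | _ k ih =>
      intro t hk h0 hlt
      by_cases h : t < n
      · rw [Int.emod_eq_of_lt h0 h]
      · push_neg at h
        have hstep : x (v₁ + t) = x (v₁ + (t - n)) := by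
          have := hper' (t - n) (by omega) (by omega)
          rw [this]; congr 1; ring
        rw [hstep]
        have hmeas : (t - n).toNat < k := by omega
        have := ih _ hmeas (t - n) rfl (by omega) (by omega)
        rw [this, hmodsub]
  -- downward direction
  have down : ∀ k : ℕ, ∀ t : ℤ, (-t).toNat = k → -N ≤ t → t < 0 →
      x (v₁ + t) = x (v₁ + t % n) := by
    intro k
    induction k using Nat.strong_induction_on with
    | _ k ih =>
      intro t hk h1 h2
      have hstep : x (v₁ + t) = x (v₁ + (t + n)) := by
        have := hper' t h1 (by omega)
        rw [this]; congr 1; ring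
      rw [hstep]
      by_cases h : t + n < 0
      · have hmeas : (-(t + n)).toNat < k := by omega
        have := ih _ hmeas (t + n) rfl (by omega) h
        rw [this, hmodadd]
      · push_neg at h
        have := up (t+n).toNat (t + n) rfl h (by omega)
        rw [this, hmodadd]
  have keylem : ∀ t : ℤ, -N ≤ t → t < n + N → x (v₁ + t) = x (v₁ + t % n) := by
    intro t h1 h2
    by_cases h : 0 ≤ t
    · exact up t.toNat t rfl h h2
    · exact down (-t).toNat t rfl h1 (by omega)
  -- the periodic point
  set y : ℤ → A := fun m => x (v₁ + (m - v₁) % n) with hy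
  refine ⟨y, ?_, n, by omega, ?_⟩
  · intro v
    set r : ℤ := (v - v₁) % n with hr
    have hr0 : 0 ≤ r := Int.emod_nonneg _ (by omega)
    have hrn : r < n := Int.emod_lt_of_pos _ hnpos
    have hblock : (fun w : {w // w ∈ W} => y (v + w.1))
        = (fun w : {w // w ∈ W} => x (v₁ + r + w.1)) := by
      funext w
      obtain ⟨hw1, hw2⟩ := hWbound w.1 w.2
      have e1 : (v + w.1 - v₁) % n = (r + w.1) % n := by
        rw [hr]
        conv_lhs => rw [show v + w.1 - v₁ = (v - v₁) + w.1 by ring, Int.add_emod]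
        conv_rhs => rw [Int.add_emod, Int.emod_emod_of_dvd (v - v₁) dvd_rfl]
      have e2 : x (v₁ + r + w.1) = x (v₁ + (r + w.1) % n) := by
        have := keylem (r + w.1) (by omega) (by omega)
        rw [← this]; congr 1; ring
      simp only [hy]
      rw [e1, e2]
    rw [hblock]
    have := hx (v₁ + r)
    convert this using 2
  · intro m
    simp only [hy]
    congr 2
    rw [show n + m - v₁ = (m - v₁) + n by ring, hmodadd]
end

section
/- Let Γ be a finitely generated abelian group, Γ0 ≤ Γ a subgroup, X ⊆ Σ^Γ a Γ-subshift of finite type over a finite alphabet Σ, and suppose X_{Γ0} := { x ∈ X : Γ0 ≤ stab(x) } is nonempty. Then X_{Γ0} is a Γ-subshift of finite type. -/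
/-- `X` is a subshift of finite type of the full shift `A^Γ`:
it is cut out by a finite window `W` and a forbidden set of patterns on `W`. -/
def IsSFT {Γ A : Type*} [AddCommGroup Γ] (X : Set (Γ → A)) : Prop :=
  ∃ (W : Finset Γ) (Fbad : Set ({w // w ∈ W} → A)),
    X = { x : Γ → A | ∀ v : Γ, (fun w : {w // w ∈ W} => x (v + w.1)) ∉ Fbad }

theorem stmt_4 (Γ A : Type*) [AddCommGroup Γ] [AddGroup.FG Γ] [Fintype A]
    (Γ0 : AddSubgroup Γ) (X : Set (Γ → A)) (hX : IsSFT X)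
    (X0 : Set (Γ → A))
    (hX0 : X0 = { x ∈ X | ∀ v ∈ Γ0, ∀ w : Γ, x (v + w) = x w })
    (hne : X0.Nonempty) :
    IsSFT X0 := by
  classical
  obtain ⟨W, F, hW⟩ := hX
  -- Γ0 is finitely generated
  have hfin : Module.Finite ℤ Γ := Module.Finite.iff_addGroup_fg.2 ‹_›
  have hnoeth : IsNoetherian ℤ Γ := inferInstance
  obtain ⟨S, hS⟩ := (IsNoetherian.noetherian (AddSubgroup.toIntSubmodule Γ0))
  -- key equivalence
  have key : ∀ x : Γ → A, (∀ v ∈ Γ0, ∀ w : Γ, x (v + w) = x w) ↔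
      (∀ s ∈ S, ∀ w : Γ, x (s + w) = x w) := by
    intro x
    constructor
    · intro h s hs w
      apply h s _ w
      have : (s : Γ) ∈ Submodule.span ℤ (S : Set Γ) := Submodule.subset_span hs
      rw [hS] at this
      exact this
    · intro h v hv w
      have hv' : v ∈ Submodule.span ℤ (S : Set Γ) := by rw [hS]; exact hv
      -- stabilizer as a submodule
      let St : Submodule ℤ Γ := AddSubgroup.toIntSubmodule
        { carrier := {v | ∀ w : Γ, x (v + w) = x w}
          zero_mem' := by intro w; rw [zero_add]
          add_mem' := by
            intro a b ha hb w
            rw [add_assoc, ha, hb]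
          neg_mem' := by
            intro a ha w
            have := ha (-a + w)
            rw [← add_assoc, add_neg_cancel, zero_add] at this
            exact this.symm }
      have hsub : (S : Set Γ) ⊆ St := fun s hs => h s hs
      exact Submodule.span_le.2 hsub hv' w
  set W' : Finset Γ := W ∪ S ∪ {0} with hW'
  have hWW : ∀ w ∈ W, w ∈ W' := fun w h => by simp [hW', h]
  have hSW : ∀ s ∈ S, s ∈ W' := fun s h => by simp [hW', h]
  have h0W : (0 : Γ) ∈ W' := by simp [hW']
  refine ⟨W', {p | (fun w : {w // w ∈ W} => p ⟨w.1, hWW w.1 w.2⟩) ∈ F ∨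
      ∃ s : Γ, ∃ hs : s ∈ S, p ⟨s, hSW s hs⟩ ≠ p ⟨0, h0W⟩}, ?_⟩
  ext x
  rw [hX0]
  simp only [Set.mem_setOf_eq, Set.mem_sep_iff, key x]
  constructor
  · rintro ⟨hx, hst⟩ v
    rw [hW] at hx
    push_neg
    refine ⟨hx v, ?_⟩
    intro s hs
    have := hst s hs v
    simpa [add_comm] using this
  · intro h
    constructor
    · rw [hW]
      intro v
      have := h v
      push_neg at this
      exact this.1
    · intro s hs w
      have := h w
      push_neg at this
      have := this.2 s hs
      simpa [add_comm] using this
end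

section
/- (Dilation lemma) Let Γ be a countable abelian group, F a finite subset of Γ with 0 ∈ F, ℓ a positive integer, and f : Γ → Z a bounded function with 1_F * f = ℓ. Let q1 be the product of all primes p ≤ (max f − min f)·|F|, let q2 be the product of the orders of all torsion elements of F − F, and set q = q1·q2. Then for every positive integer r with r ≡ 1 (mod q), one has 1_{rF} * f = ℓ, where rF = { r·v : v ∈ F }. -/
open scoped Classical Pointwise

/-!
Fix a prime `p > (max f - min f) |F|` and write `u_t = ∑_{y ∈ F} δ_{t y}` in the group ring, acting on
functions by convolution. If `u_t * f = ℓ`, then `u_t ^ p * f = ℓ |F| ^ (p - 1)`, while modulo `p`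
the Frobenius gives `u_t ^ p = u_{p t}`; with Fermat, `u_{p t} * f ≡ ℓ (mod p)`. But `u_{p t} * f`
and `u_1 * f = ℓ` differ by at most `(max f - min f) |F| < p`, so `u_{p t} * f = ℓ`. Since `r` is
coprime to `q1`, all its prime factors are such primes, and induction gives `u_r * f = ℓ`. Finally
`r ≡ 1` modulo the order of every torsion element of `F - F` makes `v ↦ r v` injective on `F`, so
`u_r` is the indicator of `r F`.
-/

open AddMonoidAlgebra

section Convolution

variable (R : Type*) {Γ : Type*} [CommRing R] [AddCommGroup Γ]

def translation : Multiplicative Γ →* Module.End R (Γ → R) where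
  toFun a := LinearMap.funLeft R R (· - a.toAdd)
  map_one' := by ext; simp
  map_mul' a b := by ext; simp [sub_sub]

namespace AddMonoidAlgebra

/-- `convolution R g f x = ∑ a, g a * f (x - a)`. -/
noncomputable def convolution : R[Γ] →ₐ[R] Module.End R (Γ → R) :=
  lift R (Module.End R (Γ → R)) Γ (translation R)

variable {R}

@[simp]
lemma convolution_single_apply (a : Γ) (c : R) (f : Γ → R) (x : Γ) :
    convolution R (single a c) f x = c * f (x - a) := by
  simp [convolution, translation]

noncomputable def dilatedIndicator (F : Finset Γ) (t : ℕ) : R[Γ] := ∑ y ∈ F, single (t • y) 1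

lemma convolution_dilatedIndicator_apply (F : Finset Γ) (t : ℕ) (f : Γ → R) (x : Γ) :
    convolution R (dilatedIndicator F t) f x = ∑ y ∈ F, f (x - t • y) := by
  simp [dilatedIndicator]

lemma convolution_dilatedIndicator_pow_succ_apply {F : Finset Γ} {t : ℕ} {f : Γ → R} {c : R}
    (ht : ∀ x, ∑ y ∈ F, f (x - t • y) = c) (k : ℕ) (x : Γ) :
    convolution R (dilatedIndicator F t ^ (k + 1)) f x = F.card ^ k * c := by
  induction k generalizing x with
  | zero => simpa [convolution_dilatedIndicator_apply] using ht x
  | succ k ih =>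
    rw [pow_succ', map_mul, Module.End.mul_apply, convolution_dilatedIndicator_apply]
    simp only [ih, Finset.sum_const, nsmul_eq_mul]
    ring

lemma dilatedIndicator_pow_char (p : ℕ) [Fact p.Prime] [CharP R p] (F : Finset Γ) (t : ℕ) :
    (dilatedIndicator F t : R[Γ]) ^ p = dilatedIndicator F (p * t) := by
  have : CharP R[Γ] p := charP_of_injective_algebraMap (single_right_injective (m := 0)) p
  simp only [dilatedIndicator, sum_pow_char, single_pow, one_pow, smul_smul]

end AddMonoidAlgebra

end Convolution

section Dilation

variable {Γ : Type*} [AddCommGroup Γ]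

theorem sum_sub_prime_mul_nsmul_modEq {F : Finset Γ} {f : Γ → ℤ} {ℓ : ℤ} {t p : ℕ}
    (hp : p.Prime) (ht : ∀ x, ∑ y ∈ F, f (x - t • y) = ℓ) (x : Γ) :
    ∑ y ∈ F, f (x - (p * t) • y) ≡ F.card ^ (p - 1) * ℓ [ZMOD p] := by
  have : Fact p.Prime := ⟨hp⟩
  rw [← ZMod.intCast_eq_intCast_iff]
  push_cast
  rw [← convolution_dilatedIndicator_apply (f := fun a => (f a : ZMod p)),
    ← dilatedIndicator_pow_char,
    show dilatedIndicator F t ^ p = dilatedIndicator F t ^ (p - 1 + 1) by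
      rw [Nat.sub_one_add_one hp.ne_zero]]
  exact convolution_dilatedIndicator_pow_succ_apply (fun x => by simp [← ht x]) _ x

theorem abs_sum_sub_sum_le {ι α R : Type*} [CommRing R] [LinearOrder R] [IsStrictOrderedRing R]
    {f : α → R} {M m : R} (hM : ∀ x, f x ≤ M) (hm : ∀ x, m ≤ f x)
    (s : Finset ι) (a b : ι → α) :
    |∑ i ∈ s, f (a i) - ∑ i ∈ s, f (b i)| ≤ (M - m) * s.card := by
  rw [← Finset.sum_sub_distrib, mul_comm, ← nsmul_eq_mul, ← Finset.sum_const]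
  refine (Finset.abs_sum_le_sum_abs _ _).trans (Finset.sum_le_sum fun i _ => ?_)
  rw [abs_sub_le_iff]
  constructor <;> linarith [hM (a i), hm (a i), hM (b i), hm (b i)]

theorem sum_sub_prime_mul_nsmul_eq {F : Finset Γ} {f : Γ → ℤ} {ℓ M m : ℤ}
    (hM : ∀ x, f x ≤ M) (hm : ∀ x, m ≤ f x) (htile : ∀ x, ∑ y ∈ F, f (x - y) = ℓ)
    {p t : ℕ} (hp : p.Prime) (hpF : (M - m) * F.card < p)
    (ht : ∀ x, ∑ y ∈ F, f (x - t • y) = ℓ) (x : Γ) :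
    ∑ y ∈ F, f (x - (p * t) • y) = ℓ := by
  have hbound := abs_sum_sub_sum_le hM hm F (fun y => x - (p * t) • y) (fun y => x - y)
  rw [htile] at hbound
  -- When `(M - m) |F| ≤ 0` (`f` constant or `F = ∅`) the bound alone forces equality.
  rcases le_or_gt ((M - m) * F.card) 0 with hle | hpos
  · exact sub_eq_zero.mp (abs_nonpos_iff.mp (hbound.trans hle))
  · have hcard_pos : 0 < F.card := Nat.pos_of_ne_zero fun h => by
      rw [h, Nat.cast_zero, mul_zero] at hpos
      exact hpos.false
    have hcard_lt : F.card < p := by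
      have : (1 : ℤ) ≤ M - m := pos_of_mul_pos_left hpos (by positivity)
      have : (F.card : ℤ) < p := by nlinarith
      exact_mod_cast this
    have hcop : IsCoprime (F.card : ℤ) p := Nat.isCoprime_iff_coprime.mpr
      ((hp.coprime_iff_not_dvd.mpr (Nat.not_dvd_of_pos_of_lt hcard_pos hcard_lt)).symm)
    have hfermat := Int.ModEq.pow_card_sub_one_eq_one hp hcop
    have hcong := (sum_sub_prime_mul_nsmul_modEq hp ht x).trans
      (by simpa using hfermat.mul_right ℓ)
    exact sub_eq_zero.mp (Int.eq_zero_of_abs_lt_dvd hcong.symm.dvd (hbound.trans_lt hpF))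

theorem sum_sub_nsmul_eq_of_forall_prime_dvd {F : Finset Γ} {f : Γ → ℤ} {ℓ M m : ℤ}
    (hM : ∀ x, f x ≤ M) (hm : ∀ x, m ≤ f x) (htile : ∀ x, ∑ y ∈ F, f (x - y) = ℓ)
    {n : ℕ} (hn : n ≠ 0) (hprime : ∀ p, p.Prime → p ∣ n → (M - m) * F.card < p) (x : Γ) :
    ∑ y ∈ F, f (x - n • y) = ℓ := by
  induction n using induction_on_primes generalizing x with
  | zero => exact absurd rfl hn
  | one => simpa using htile x
  | prime_mul p a hp ih =>
    exact sum_sub_prime_mul_nsmul_eq hM hm htile hp (hprime p hp (dvd_mul_right p a))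
      (ih (right_ne_zero_of_mul hn) fun q hq hqa => hprime q hq (dvd_mul_of_dvd_right hqa p)) x

theorem injOn_nsmul_of_modEq_one {s : Set Γ} {r q : ℕ} (hr : r ≠ 0)
    (horder : ∀ y ∈ s, ∀ y' ∈ s, addOrderOf (y - y') ≠ 0 → addOrderOf (y - y') ∣ q)
    (hrq : r ≡ 1 [MOD q]) :
    Set.InjOn (fun v => r • v) s := by
  intro y hy y' hy' h
  have hv : r • (y - y') = 0 := by rw [smul_sub, sub_eq_zero]; exact h
  have hord : addOrderOf (y - y') ≠ 0 := fun h0 =>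
    hr (by simpa [h0] using addOrderOf_dvd_of_nsmul_eq_zero hv)
  have hfix : r • (y - y') = 1 • (y - y') :=
    nsmul_eq_nsmul_iff_modEq.mpr (hrq.of_dvd (horder y hy y' hy' hord))
  rw [one_nsmul, hv] at hfix
  exact sub_eq_zero.mp hfix.symm

end Dilation

theorem stmt_6_general (Γ : Type*) [AddCommGroup Γ] [DecidableEq Γ]
    (F : Finset Γ) (ℓ : ℕ)
    (f : Γ → ℤ) (M m : ℤ) (hM : ∀ x, f x ≤ M) (hm : ∀ x, m ≤ f x)
    (htile : ∀ x, ∑ y ∈ F, f (x - y) = (ℓ : ℤ))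
    (q1 q2 q : ℕ)
    (hq1 : q1 = ∏ p ∈ (Finset.range (((M - m) * F.card).toNat + 1)).filter Nat.Prime, p)
    (hq2 : q2 = ∏ v ∈ (F - F).filter (fun v => addOrderOf v ≠ 0), addOrderOf v)
    (hq : q = q1 * q2) :
    ∀ r : ℕ, 0 < r → r ≡ 1 [MOD q] →
      ∀ x, ∑ y ∈ F.image (fun v => r • v), f (x - y) = (ℓ : ℤ) := by
  intro r hr hrq x
  have hinj : Set.InjOn (fun v => r • v) (F : Set Γ) := by
    refine injOn_nsmul_of_modEq_one hr.ne' (fun y hy y' hy' hord => ?_) hrq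
    rw [hq, hq2]
    exact dvd_mul_of_dvd_right (Finset.dvd_prod_of_mem _
      (Finset.mem_filter.mpr ⟨Finset.sub_mem_sub hy hy', hord⟩)) q1
  rw [Finset.sum_image hinj]
  have hcop : r.Coprime q1 := by
    simpa using (hrq.of_dvd (hq ▸ dvd_mul_right q1 q2)).gcd_eq
  refine sum_sub_nsmul_eq_of_forall_prime_dvd hM hm htile hr.ne' (fun p hp hpr => ?_) x
  have hpq1 : ¬ p ∣ q1 := (Nat.Prime.coprime_iff_not_dvd hp).mp (hcop.coprime_dvd_left hpr)
  change q1 = primorial _ at hq1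
  rw [hq1, hp.dvd_primorial_iff, not_le] at hpq1
  exact (Int.self_le_toNat _).trans_lt (by exact_mod_cast hpq1)

theorem stmt_6 (Γ : Type*) [AddCommGroup Γ] [Countable Γ] [DecidableEq Γ]
    (F : Finset Γ) (h0F : (0 : Γ) ∈ F) (ℓ : ℕ) (hℓ : 0 < ℓ)
    (f : Γ → ℤ) (M m : ℤ) (hM : ∀ x, f x ≤ M) (hm : ∀ x, m ≤ f x)
    (htile : ∀ x, ∑ y ∈ F, f (x - y) = (ℓ : ℤ))
    (q1 q2 q : ℕ)
    (hq1 : q1 = ∏ p ∈ (Finset.range (((M - m) * F.card).toNat + 1)).filter Nat.Prime, p)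
    (hq2 : q2 = ∏ v ∈ (F - F).filter (fun v => addOrderOf v ≠ 0), addOrderOf v)
    (hq : q = q1 * q2) :
    ∀ r : ℕ, 0 < r → r ≡ 1 [MOD q] →
      ∀ x, ∑ y ∈ F.image (fun v => r • v), f (x - y) = (ℓ : ℤ) :=
  stmt_6_general Γ F ℓ f M m hM hm htile q1 q2 q hq1 hq2 hq
end

section
/- Let Σ ⊆ R be finite, g1,...,gr : Z^d → R finitely supported functions, and f : Z^d → Σ a (d−1)-periodic function such that g_j * f is d-periodic for every 1 ≤ j ≤ r. Then there exists a d-periodic function f̃ : Z^d → Σ with g_j * f̃ = g_j * f for all 1 ≤ j ≤ r. -/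
/-- Independent tuple of elements of an abelian group. -/
def IndepT {G : Type*} [AddCommGroup G] {k : ℕ} (g : Fin k → G) : Prop :=
  ∀ n : Fin k → ℤ, (∑ i, n i • g i) = 0 → ∀ i, n i = 0

/-- The stabilizer of a function on an abelian group, as a subgroup. -/
def stabG {G β : Type*} [AddCommGroup G] (f : G → β) : AddSubgroup G where
  carrier := { v : G | ∀ x : G, f (x + v) = f x }
  zero_mem' := by intro x; simp
  add_mem' := by
    intro a b ha hb x
    rw [← add_assoc, hb, ha]
  neg_mem' := by
    intro a ha x
    simpa using (ha (x + -a)).symm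

/-- Convolution of a finitely supported function `g` with a bounded function `f`. -/
noncomputable def convWith {d : ℕ} (g f : (Fin d → ℤ) → ℝ) : (Fin d → ℤ) → ℝ :=
  fun x => ∑ᶠ y : Fin d → ℤ, g y * f (x - y)

/-!
The periods `u` span a lattice `Λ` of rank `d - 1`, so `ℤ^d ⧸ Λ` has rank one: modulo its finite
torsion it is `ℤ`, which gives a surjection `φ : ℤ^d → ℤ` vanishing on `Λ` whose slabs
`B ≤ φ < B + W` meet only finitely many cosets of `Λ`. Hence `f`, being `Λ`-periodic, shows only
finitely many patterns on the translates of a slab by multiples of a common period `w` of the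
convolutions, and by pigeonhole two of them coincide: there is a period `v` of every `g j * f` with
`φ v > 0` such that `f (z + v) = f z` on a slab. Repeating the part of `f` on a slab of width `φ v`
along `v` yields `f̃`, periodic under `Λ` and `v`, hence under a subgroup of finite index. It agrees
with `f` on a slab wider than the supports of the `g j`, and both `g j * f̃` and `g j * f` are
`v`-periodic, so every value of the two convolutions can be computed inside that slab.
-/

open Module

section RankOne

variable {E : Type*} [AddCommGroup E]

theorem exists_surjective_ker_eq_torsion {R M : Type*} [CommRing R] [IsDomain R]
    [IsPrincipalIdealRing R] [AddCommGroup M] [Module R M] [Module.Finite R M]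
    (h : finrank R M = 1) :
    ∃ ψ : M →ₗ[R] R, Function.Surjective ψ ∧ LinearMap.ker ψ = Submodule.torsion R M := by
  have hrank : finrank R (M ⧸ Submodule.torsion R M) = finrank R R := by
    rw [finrank_quotient_eq_of_le_torsion le_rfl, h, finrank_self]
  let e := LinearEquiv.ofFinrankEq _ _ hrank
  refine ⟨e.toLinearMap ∘ₗ (Submodule.torsion R M).mkQ,
    e.surjective.comp (Submodule.torsion R M).mkQ_surjective, ?_⟩
  rw [LinearMap.ker_comp, LinearEquiv.ker, Submodule.comap_bot, Submodule.ker_mkQ]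

theorem finrank_quotient_span_of_linearIndependent {R M ι : Type*} [CommRing R] [IsDomain R]
    [AddCommGroup M] [Module R M] [Module.Finite R M] [Fintype ι] {u : ι → M}
    (hu : LinearIndependent R u) :
    finrank R (M ⧸ Submodule.span R (Set.range u)) = finrank R M - Fintype.card ι := by
  rw [Submodule.finrank_quotient, finrank_span_eq_card hu]

theorem finite_preimage_of_finite_ker {B : Type*} [AddGroup B] (ψ : E →+ B)
    (hker : (ψ.ker : Set E).Finite) {s : Set B} (hs : s.Finite) : (ψ ⁻¹' s).Finite := by
  refine hs.preimage' fun b _ => ?_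
  rcases (ψ ⁻¹' {b}).eq_empty_or_nonempty with hempty | ⟨a, ha⟩
  · simp [hempty]
  · refine (hker.image (a + ·)).subset fun x hx => ⟨x - a, ?_, add_sub_cancel a x⟩
    simp_all [AddMonoidHom.mem_ker]

variable [Module.Finite ℤ E] {Λ : Submodule ℤ E} {ψ : (E ⧸ Λ) →ₗ[ℤ] ℤ}

theorem finite_image_mkQ_slab (hψ : LinearMap.ker ψ = Submodule.torsion ℤ (E ⧸ Λ)) (a b : ℤ) :
    (Λ.mkQ '' {z | ψ (Λ.mkQ z) ∈ Set.Ico a b}).Finite := by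
  have : Finite (LinearMap.ker ψ) := hψ ▸ finite_of_fg_torsion _ Submodule.torsion_isTorsion
  have hker : (LinearMap.ker ψ : Set (E ⧸ Λ)).Finite := Set.toFinite _
  refine (finite_preimage_of_finite_ker ψ.toAddMonoidHom hker
    (Set.finite_Ico a b)).subset ?_
  rintro _ ⟨z, hz, rfl⟩
  exact hz

theorem finiteIndex_of_forall_zsmul_mem {H : AddSubgroup E}
    (h : ∀ z, ∃ D : ℤ, D ≠ 0 ∧ D • z ∈ H) : H.FiniteIndex := by
  have htors : IsTorsion ℤ (E ⧸ H.toIntSubmodule) := by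
    rintro ⟨z⟩
    obtain ⟨D, hD, hDz⟩ := h z
    exact ⟨⟨D, mem_nonZeroDivisors_of_ne_zero hD⟩, (Submodule.Quotient.mk_eq_zero _).mpr hDz⟩
  have : Finite (E ⧸ H) := finite_of_fg_torsion (E ⧸ H.toIntSubmodule) htors
  exact AddSubgroup.finiteIndex_of_finite_quotient

theorem finiteIndex_of_ker_eq_torsion (hψ : LinearMap.ker ψ = Submodule.torsion ℤ (E ⧸ Λ))
    {H : AddSubgroup E} (hΛ : Λ.toAddSubgroup ≤ H) {v : E} (hv : v ∈ H)
    (hψv : ψ (Λ.mkQ v) ≠ 0) : H.FiniteIndex := by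
  refine finiteIndex_of_forall_zsmul_mem fun z => ?_
  set a := ψ (Λ.mkQ v)
  set b := ψ (Λ.mkQ z)
  have htors : Λ.mkQ (a • z - b • v) ∈ Submodule.torsion ℤ (E ⧸ Λ) := by
    rw [← hψ, LinearMap.mem_ker]
    simp only [map_sub, map_smul, smul_eq_mul]
    ring
  obtain ⟨⟨D, hD⟩, hDz⟩ := (Submodule.mem_torsion_iff _).mp htors
  have hDΛ : D • (a • z - b • v) ∈ Λ := by
    rwa [← Submodule.Quotient.mk_eq_zero, Submodule.Quotient.mk_smul]
  refine ⟨D * a, mul_ne_zero (nonZeroDivisors.ne_zero hD) hψv, ?_⟩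
  have hdecomp : (D * a) • z = D • (a • z - b • v) + (D * b) • v := by
    simp only [smul_sub, mul_smul]
    abel
  rw [hdecomp]
  exact H.add_mem (hΛ hDΛ) (H.zsmul_mem hv _)

end RankOne

section Slab

variable {E β : Type*} [AddCommGroup E]

theorem apply_eq_of_sub_mem {Λ : AddSubgroup E} {h : E → β} (hΛ : Λ ≤ stabG h) {a b : E}
    (hab : a - b ∈ Λ) : h a = h b := by
  simpa using hΛ hab b

theorem exists_nsmul_periodic_on_slab (φ : E →+ ℤ) (Λ : Submodule ℤ E) {W : ℤ}
    (hslab : (Λ.mkQ '' {z | φ z ∈ Set.Ico 0 W}).Finite) {h : E → β}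
    (hrange : (Set.range h).Finite)
    (hΛ : Λ.toAddSubgroup ≤ stabG h) (w : E) :
    ∃ B : ℤ, ∃ k : ℕ, 0 < k ∧ ∀ z, B ≤ φ z → φ z < B + W → h (z + k • w) = h z := by
  have := hslab.to_subtype
  have := hrange.to_subtype
  obtain ⟨n, n', hne, heq⟩ := Finite.exists_ne_map_eq_of_infinite
    fun (n : ℕ) (m : Λ.mkQ '' {z | φ z ∈ Set.Ico 0 W}) =>
      (⟨h (Quotient.out m.1 + n • w), Set.mem_range_self _⟩ : Set.range h)
  wlog hlt : n < n' generalizing n n'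
  · exact this n' n hne.symm heq.symm (by omega)
  obtain ⟨k, rfl⟩ := Nat.exists_eq_add_of_lt hlt
  refine ⟨φ (n • w), k + 1, k.succ_pos, fun z hz₀ hz₁ => ?_⟩
  have hm : Λ.mkQ (z - n • w) ∈ Λ.mkQ '' {z | φ z ∈ Set.Ico 0 W} :=
    ⟨z - n • w, ⟨by simp only [map_sub]; omega, by simp only [map_sub]; omega⟩, rfl⟩
  have hstep := congrArg Subtype.val (congrFun heq ⟨_, hm⟩)
  set o := Quotient.out (Λ.mkQ (z - n • w))
  have hout : o - (z - n • w) ∈ Λ := (Submodule.Quotient.eq Λ).mp (Submodule.Quotient.mk_out _)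
  calc h (z + (k + 1) • w)
      = h (o + (n + k + 1) • w) := apply_eq_of_sub_mem hΛ <| show _ ∈ Λ by
        convert Λ.neg_mem hout using 1
        simp only [add_nsmul]
        abel
    _ = h (o + n • w) := hstep.symm
    _ = h z := apply_eq_of_sub_mem hΛ <| show _ ∈ Λ by
        convert hout using 1
        abel

end Slab

section Periodize

variable {E β : Type*} [AddCommGroup E]

/-- Repeats the values of `h` on the slab `B ≤ φ < B + φ v` along `v` (the integer division rounds
down when `0 < φ v`). -/
def periodize (φ : E →+ ℤ) (v : E) (B : ℤ) (h : E → β) (x : E) : β :=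
  h (x - ((φ x - B) / φ v) • v)

variable (φ : E →+ ℤ) {v : E} (B : ℤ) (h : E → β)

theorem self_mem_stabG_periodize (hv : φ v ≠ 0) : v ∈ stabG (periodize φ v B h) := by
  intro x
  have hq : (φ (x + v) - B) / φ v = (φ x - B) / φ v + 1 := by
    rw [map_add, show φ x + φ v - B = φ x - B + 1 * φ v by ring,
      Int.add_mul_ediv_right _ _ hv]
  simp only [periodize, hq, add_smul, one_smul]
  congr 1
  abel

theorem mem_stabG_periodize {c : E} (hφc : φ c = 0) (hc : c ∈ stabG h) :
    c ∈ stabG (periodize φ v B h) := by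
  intro x
  simp only [periodize, map_add, hφc, add_zero]
  rw [add_sub_right_comm, hc]

variable {φ B h} {W : ℤ}

theorem apply_sub_nsmul_eq_of_slab (hv : 0 ≤ φ v)
    (hh : ∀ z, B ≤ φ z → φ z < B + W → h (z + v) = h z) :
    ∀ (n : ℕ) (x : E), B ≤ φ x - n * φ v → φ x < B + φ v + W → h (x - n • v) = h x := by
  intro n
  induction n with
  | zero => simp
  | succ n ih =>
    intro x hx₀ hx₁
    push_cast at hx₀
    have hnv : 0 ≤ (n : ℤ) * φ v := mul_nonneg n.cast_nonneg hv
    have hφx : φ (x - (n + 1) • v) = φ x - (n + 1) * φ v := by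
      simp only [map_sub, map_nsmul, nsmul_eq_mul]
      push_cast
      ring
    have hstep := hh (x - (n + 1) • v) (by linarith) (by linarith)
    rw [← hstep, ← ih x (by linarith) hx₁, add_nsmul, one_nsmul]
    congr 1
    abel

theorem periodize_eq_of_slab (hv : 0 < φ v) (hh : ∀ z, B ≤ φ z → φ z < B + W → h (z + v) = h z)
    {x : E} (hx₀ : B ≤ φ x) (hx₁ : φ x < B + φ v + W) : periodize φ v B h x = h x := by
  obtain ⟨n, hn⟩ : ∃ n : ℕ, (n : ℤ) = (φ x - B) / φ v :=
    ⟨_, Int.toNat_of_nonneg (Int.ediv_nonneg (by omega) hv.le)⟩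
  rw [periodize, ← hn, natCast_zsmul]
  refine apply_sub_nsmul_eq_of_slab hv.le hh n x ?_ hx₁
  rw [hn]
  linarith [Int.ediv_mul_le (φ x - B) hv.ne']

theorem finiteIndex_stabG_periodize [Module.Finite ℤ E] {Λ : Submodule ℤ E}
    {ψ : (E ⧸ Λ) →ₗ[ℤ] ℤ} (hψ : LinearMap.ker ψ = Submodule.torsion ℤ (E ⧸ Λ)) {v : E}
    (hv : ψ (Λ.mkQ v) ≠ 0) (B : ℤ) {h : E → β} (hΛ : Λ.toAddSubgroup ≤ stabG h) :
    (stabG (periodize (ψ ∘ₗ Λ.mkQ).toAddMonoidHom v B h)).FiniteIndex := by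
  refine finiteIndex_of_ker_eq_torsion hψ (fun c hc => ?_) (self_mem_stabG_periodize _ B h hv) hv
  refine mem_stabG_periodize _ B h ?_ (hΛ hc)
  exact LinearMap.ker_le_ker_comp Λ.mkQ ψ (by rwa [Submodule.ker_mkQ])

end Periodize

section Convolution

variable {d : ℕ}

theorem stabG_le_stabG_convWith (g h : (Fin d → ℤ) → ℝ) : stabG h ≤ stabG (convWith g h) :=
  fun t ht x => finsum_congr fun y => by rw [add_sub_right_comm, ht]

theorem convWith_apply_congr {g h₁ h₂ : (Fin d → ℤ) → ℝ} {x : Fin d → ℤ}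
    (hx : ∀ y, g y ≠ 0 → h₁ (x - y) = h₂ (x - y)) : convWith g h₁ x = convWith g h₂ x :=
  finsum_congr fun y => by
    by_cases hy : g y = 0
    · simp [hy]
    · rw [hx y hy]

theorem convWith_eq_of_eqOn_slab {g h₁ h₂ : (Fin d → ℤ) → ℝ} (φ : (Fin d → ℤ) →+ ℤ)
    {v : Fin d → ℤ} (hv : 0 < φ v) {W₀ B : ℤ} (hg : ∀ y, g y ≠ 0 → |φ y| ≤ W₀)
    (h₁v : v ∈ stabG (convWith g h₁)) (h₂v : v ∈ stabG (convWith g h₂))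
    (heq : ∀ z, B ≤ φ z → φ z < B + φ v + 2 * W₀ → h₁ z = h₂ z) :
    convWith g h₁ = convWith g h₂ := by
  funext x
  set q := (φ x - B - W₀) / φ v
  have hshift : ∀ C : (Fin d → ℤ) → ℝ, v ∈ stabG C → C x = C (x - q • v) := fun C hC => by
    simpa using AddSubgroup.zsmul_mem _ hC q (x - q • v)
  rw [hshift _ h₁v, hshift _ h₂v]
  refine convWith_apply_congr fun y hy => heq _ ?_ ?_ <;>
  · have := abs_le.mp (hg y hy)
    have := Int.ediv_mul_le (φ x - B - W₀) hv.ne'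
    have := Int.lt_ediv_add_one_mul_self (φ x - B - W₀) hv
    simp only [map_sub, map_zsmul, smul_eq_mul]
    linarith

end Convolution

theorem stmt_12 (d r : ℕ) (S : Finset ℝ)
    (g : Fin r → (Fin d → ℤ) → ℝ)
    (hsupp : ∀ j, (Function.support (g j)).Finite)
    (f : (Fin d → ℤ) → ℝ) (hfS : ∀ x, f x ∈ S)
    (hper : ∃ u : Fin (d - 1) → (Fin d → ℤ), IndepT u ∧ ∀ i, u i ∈ stabG f)
    (hconv : ∀ j, (stabG (convWith (g j) f)).FiniteIndex) :
    ∃ ftil : (Fin d → ℤ) → ℝ, (∀ x, ftil x ∈ S) ∧ (stabG ftil).FiniteIndex ∧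
      ∀ j, convWith (g j) ftil = convWith (g j) f := by
  rcases Nat.eq_zero_or_pos d with rfl | hd
  · exact ⟨f, hfS, inferInstance, fun _ => rfl⟩
  obtain ⟨u, hu, huf⟩ := hper
  set Λ := Submodule.span ℤ (Set.range u)
  have hrank : finrank ℤ ((Fin d → ℤ) ⧸ Λ) = 1 := by
    rw [finrank_quotient_span_of_linearIndependent (Fintype.linearIndependent_iff.mpr hu),
      finrank_fin_fun, Fintype.card_fin]
    omega
  obtain ⟨ψ, hψsurj, hψ⟩ := exists_surjective_ker_eq_torsion hrank
  set φ : (Fin d → ℤ) →+ ℤ := (ψ ∘ₗ Λ.mkQ).toAddMonoidHom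
  have hΛf : Λ.toAddSubgroup ≤ stabG f := fun x hx =>
    (Submodule.span_le.mpr (Set.range_subset_iff.mpr huf) : Λ ≤ (stabG f).toIntSubmodule) hx
  set H := ⨅ j, stabG (convWith (g j) f)
  have : H.FiniteIndex := AddSubgroup.finiteIndex_iInf hconv
  obtain ⟨W₀, hW₀⟩ : ∃ W₀ : ℤ, ∀ j y, g j y ≠ 0 → |φ y| ≤ W₀ := by
    obtain ⟨W₀, hW₀⟩ := ((Set.finite_iUnion hsupp).image fun y => |φ y|).bddAbove
    exact ⟨W₀, fun j y hy => hW₀ ⟨y, Set.mem_iUnion.mpr ⟨j, hy⟩, rfl⟩⟩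
  obtain ⟨w₀, hw₀⟩ := hψsurj.comp Λ.mkQ_surjective 1
  obtain ⟨B, k, hk, hslab⟩ := exists_nsmul_periodic_on_slab φ Λ
    (finite_image_mkQ_slab hψ 0 (2 * W₀)) (S.finite_toSet.subset (Set.range_subset_iff.mpr hfS))
    hΛf (H.index • w₀)
  set v := k • H.index • w₀
  have hvH : v ∈ H := H.nsmul_mem (H.nsmul_index_mem w₀) k
  have hφv : 0 < φ v := by
    have hφw₀ : φ w₀ = 1 := hw₀
    rw [map_nsmul, map_nsmul, hφw₀, smul_smul, nsmul_eq_mul, mul_one]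
    exact_mod_cast Nat.mul_pos hk (Nat.pos_of_ne_zero AddSubgroup.FiniteIndex.index_ne_zero)
  refine ⟨periodize φ v B f, fun x => hfS _, ?_, fun j => ?_⟩
  · exact finiteIndex_stabG_periodize hψ hφv.ne' B hΛf
  · exact convWith_eq_of_eqOn_slab φ hφv (hW₀ j)
      (stabG_le_stabG_convWith _ _ (self_mem_stabG_periodize φ B f hφv.ne'))
      (AddSubgroup.mem_iInf.mp hvH j) fun z hz₀ hz₁ => periodize_eq_of_slab hφv hslab hz₀ hz₁
end

section
/- Let p be prime and F0 a nonempty proper subset of Z/pZ. Then the indicator function 1_{F0} is invertible in the convolution ring Q^{Z/pZ}: there exists g : Z/pZ → Q with g * 1_{F0} = δ_0. -/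
/-!
Identify `ℚ[ℤ/pℤ]` with `ℚ[X] / (X ^ p - 1)` via `X ↦ δ₁`, under which `1_{F0}` is the image of
`P = ∑_{a ∈ F0} X ^ a`. Since `X ^ p - 1 = Φ_p · (X - 1)` with `Φ_p = 1 + X + ⋯ + X ^ (p - 1)`
irreducible over `ℚ`, it suffices that `P(1) = #F0 ≠ 0` and that `Φ_p ∤ P`; the latter holds because
`deg P < p` would force `P` to be a constant multiple of `Φ_p`, whose coefficients are all equal,
whereas those of `P` take both values `0` and `1`. A Bézout relation `A P + B (X ^ p - 1) = 1`
then gives the inverse `A(δ₁)`.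
-/

open Polynomial Finset

namespace AddMonoidAlgebra

variable {R G : Type*} [Semiring R]

lemma coeff_mul_eq_sum_sub [AddCommGroup G] [Fintype G] (f g : AddMonoidAlgebra R G) (x : G) :
    (f * g).coeff x = ∑ y, f.coeff y * g.coeff (x - y) := by
  rw [coeff_mul_apply_left, Finsupp.sum_fintype _ _ (by simp)]
  simp only [neg_add_eq_sub]

lemma coeff_sum_single_one [DecidableEq G] (s : Finset G) (x : G) :
    (∑ a ∈ s, single a (1 : R)).coeff x = if x ∈ s then 1 else 0 := by
  simp [coeff_sum, Finsupp.single_apply]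

lemma isUnit_aeval_of_isCoprime_X_pow_sub_one {R : Type*} [CommRing R] {n : ℕ} {f : R[X]}
    (h : IsCoprime f (X ^ n - 1)) : IsUnit (aeval (single (1 : ZMod n) (1 : R)) f) := by
  have hroot : aeval (single (1 : ZMod n) (1 : R)) (X ^ n - 1 : R[X]) = 0 := by
    simp [single_pow, one_def]
  simpa [hroot, isCoprime_zero_right] using h.map (aeval (single (1 : ZMod n) (1 : R))).toRingHom

end AddMonoidAlgebra

namespace Polynomial

lemma coeff_cyclotomic_prime_of_lt (R : Type*) [Ring R] {p : ℕ} [Fact p.Prime] {n : ℕ}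
    (hn : n < p) : (cyclotomic p R).coeff n = 1 := by
  simp [cyclotomic_prime, coeff_X_pow, hn]

lemma coeff_eq_coeff_of_cyclotomic_prime_dvd {R : Type*} [Ring R] [Nontrivial R] {p : ℕ}
    [hp : Fact p.Prime] {f : R[X]} (hf : f.natDegree < p) (hdvd : cyclotomic p R ∣ f)
    {m n : ℕ} (hm : m < p) (hn : n < p) : f.coeff m = f.coeff n := by
  obtain ⟨q, rfl⟩ := hdvd
  have hq : q.natDegree = 0 := by
    rcases eq_or_ne q 0 with rfl | hq0
    · simp
    rw [(cyclotomic.monic p R).natDegree_mul' hq0, natDegree_cyclotomic,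
      Nat.totient_prime hp.out] at hf
    omega
  rw [eq_C_of_natDegree_eq_zero hq, coeff_mul_C, coeff_mul_C,
    coeff_cyclotomic_prime_of_lt R hm, coeff_cyclotomic_prime_of_lt R hn]

lemma isCoprime_X_pow_sub_one_of_coeff_ne {K : Type*} [Field K] {p : ℕ} [Fact p.Prime]
    (hirr : Irreducible (cyclotomic p K)) {f : K[X]} (hf : f.natDegree < p) (h1 : f.eval 1 ≠ 0)
    {m n : ℕ} (hm : m < p) (hn : n < p) (hmn : f.coeff m ≠ f.coeff n) :
    IsCoprime f (X ^ p - 1) := by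
  rw [← cyclotomic_prime_mul_X_sub_one]
  refine IsCoprime.mul_right ?_ ?_
  · rw [isCoprime_comm, hirr.coprime_iff_not_dvd]
    exact fun hdvd ↦ hmn (coeff_eq_coeff_of_cyclotomic_prime_dvd hf hdvd hm hn)
  · rw [isCoprime_comm, ← C_1, (irreducible_X_sub_C 1).coprime_iff_not_dvd, dvd_iff_isRoot]
    exact h1

end Polynomial

namespace ZMod

variable (R : Type*) [CommSemiring R] {n : ℕ} (s : Finset (ZMod n))

noncomputable def indicatorPolynomial : R[X] :=
  ∑ a ∈ s, X ^ a.val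

lemma coeff_indicatorPolynomial_val [NeZero n] (a : ZMod n) :
    (indicatorPolynomial R s).coeff a.val = if a ∈ s then 1 else 0 := by
  classical
  simp [indicatorPolynomial, coeff_X_pow, (val_injective n).eq_iff]

lemma natDegree_indicatorPolynomial_lt [NeZero n] : (indicatorPolynomial R s).natDegree < n := by
  have hle : (indicatorPolynomial R s).natDegree ≤ n - 1 :=
    natDegree_sum_le_of_forall_le _ _ fun a _ ↦
      (natDegree_X_pow_le _).trans (Nat.le_sub_one_of_lt a.val_lt)
  have := NeZero.pos n
  omega

lemma eval_one_indicatorPolynomial : (indicatorPolynomial R s).eval 1 = s.card := by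
  simp [indicatorPolynomial, eval_finsetSum]

lemma aeval_indicatorPolynomial [NeZero n] :
    aeval (AddMonoidAlgebra.single (1 : ZMod n) (1 : R)) (indicatorPolynomial R s) =
      ∑ a ∈ s, AddMonoidAlgebra.single a 1 := by
  simp [indicatorPolynomial, AddMonoidAlgebra.single_pow]

end ZMod

theorem stmt_14 (p : ℕ) [Fact p.Prime] (F0 : Finset (ZMod p))
    (hne : F0.Nonempty) (hproper : F0 ≠ Finset.univ) :
    ∃ g : ZMod p → ℚ,
      ∀ x : ZMod p,
        (∑ y : ZMod p, g y * (if x - y ∈ F0 then (1 : ℚ) else 0)) =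
          (if x = 0 then (1 : ℚ) else 0) := by
  obtain ⟨a, ha⟩ := hne
  obtain ⟨b, hb⟩ := not_forall.mp (mt eq_univ_of_forall hproper)
  have hcop : IsCoprime (ZMod.indicatorPolynomial ℚ F0) (X ^ p - 1) :=
    isCoprime_X_pow_sub_one_of_coeff_ne (cyclotomic.irreducible_rat (Fact.out : p.Prime).pos)
      (ZMod.natDegree_indicatorPolynomial_lt ℚ F0)
      (by simpa [ZMod.eval_one_indicatorPolynomial] using ne_empty_of_mem ha) a.val_lt b.val_lt
      (by simp [ZMod.coeff_indicatorPolynomial_val, ha, hb])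
  obtain ⟨u, hu⟩ := AddMonoidAlgebra.isUnit_aeval_of_isCoprime_X_pow_sub_one hcop
  refine ⟨(↑u⁻¹ : AddMonoidAlgebra ℚ (ZMod p)).coeff, fun x ↦ ?_⟩
  have hconv := congr_arg (·.coeff x) u.inv_mul
  rw [hu, ZMod.aeval_indicatorPolynomial, AddMonoidAlgebra.coeff_mul_eq_sum_sub] at hconv
  simpa [AddMonoidAlgebra.coeff_sum_single_one, AddMonoidAlgebra.one_def, Finsupp.single_apply,
    eq_comm] using hconv
end

section
/- Let F ⊆ Z^d be finite, A ⊆ Z^d with F ⊕ A = Z^d, and L ≤ Z^d a subgroup with A + L = A. Then for every function f : F → L, the set F_f := { v + f(v) : v ∈ F } satisfies F_f ⊕ A = Z^d. -/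
/-- `F ⊕ A = G`: every element of `G` has a unique representation `f + a`,
`f ∈ F`, `a ∈ A`. -/
def Tiles {G : Type*} [AddCommGroup G] (F : Finset G) (A : Set G) : Prop :=
  ∀ z : G, ∃! p : G × G, p.1 ∈ F ∧ p.2 ∈ A ∧ p.1 + p.2 = z

theorem Tiles.image_add_of_period {G : Type*} [AddCommGroup G] [DecidableEq G]
    {F : Finset G} {A : Set G} (htile : Tiles F A) {f : G → G}
    (hper : ∀ v ∈ F, ∀ a, a + f v ∈ A ↔ a ∈ A) :
    Tiles (F.image fun v => v + f v) A := by
  intro z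
  obtain ⟨⟨v, a⟩, ⟨hv, ha, rfl⟩, huniq⟩ := htile z
  have ha' : a - f v ∈ A := (hper v hv (a - f v)).mp (by simpa using ha)
  refine ⟨(v + f v, a - f v),
    ⟨Finset.mem_image_of_mem _ hv, ha', add_add_sub_cancel v a (f v)⟩, ?_⟩
  rintro ⟨_, b⟩ ⟨himg, hb, hsum⟩
  obtain ⟨w, hw, rfl⟩ := Finset.mem_image.mp himg
  have hrep : (w, b + f w) = (v, a) :=
    huniq _ ⟨hw, (hper w hw b).mpr hb,
      (add_left_comm w b (f w)).trans <| (add_comm b _).trans hsum⟩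
  obtain ⟨rfl, hba⟩ := Prod.mk.inj hrep
  simp [← hba]

theorem stmt_17 (d : ℕ) (F : Finset (Fin d → ℤ)) (A : Set (Fin d → ℤ))
    (htile : Tiles F A) (L : AddSubgroup (Fin d → ℤ))
    (hAL : ∀ v ∈ L, ∀ a : Fin d → ℤ, a + v ∈ A ↔ a ∈ A)
    (f : (Fin d → ℤ) → (Fin d → ℤ)) (hf : ∀ v ∈ F, f v ∈ L) :
    Tiles (F.image (fun v => v + f v)) A :=
  htile.image_add_of_period fun v hv => hAL (f v) (hf v hv)
end

section
/- Let F be a finite subset of Z^d with {0} ⊊ F, and suppose F admits a periodic co-tile A ⊆ Z^d (i.e., F ⊕ A = Z^d and A + L = A for some finite index subgroup L ≤ Z^d). Then there exist finite sets F1,...,F_{d−1} ⊆ Z^d, each containing 0, such that F_j ⊕ A = Z^d for all 1 ≤ j ≤ d−1, and (F1,...,F_{d−1},F) is an independent d-tuple of tiles: for every choice of nonzero v_j ∈ F_j and v ∈ F \ {0}, the vectors v1,...,v_{d−1},v are linearly independent over Q. -/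
namespace Stmt18

variable {d : ℕ}

/-- coordinatewise cast `ℤ^d → ℚ^d` as a `ℤ`-linear map. -/
noncomputable def ι : (Fin d → ℤ) →ₗ[ℤ] (Fin d → ℚ) :=
  LinearMap.pi fun i => (Int.castAddHom ℚ).toIntLinearMap.comp (LinearMap.proj i)

@[simp] lemma ι_apply (x : Fin d → ℤ) (i : Fin d) : ι x i = (x i : ℚ) := rfl

lemma ι_injective : Function.Injective (ι (d := d)) := by
  intro x y h
  funext i
  have : ((x i : ℚ)) = (y i : ℚ) := congrFun h i
  exact_mod_cast this

lemma tiles_image {G : Type*} [AddCommGroup G] [DecidableEq G] {F : Finset G} {A : Set G}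
    {L : AddSubgroup G} (hAL : ∀ v ∈ L, ∀ a, a + v ∈ A ↔ a ∈ A)
    (htile : Tiles F A) {τ : G → G} (hτ : ∀ f ∈ F, τ f - f ∈ L) :
    Tiles (F.image τ) A := by
  classical
  intro z
  obtain ⟨⟨f, a⟩, ⟨hf, ha, hfa⟩, huniq⟩ := htile z
  refine ⟨(τ f, z - τ f), ⟨Finset.mem_image_of_mem _ hf, ?_, by show τ f + (z - τ f) = z; abel⟩, ?_⟩
  · have hz : z - τ f = a + -(τ f - f) := by
      simp only at hfa; rw [← hfa]; abel
    rw [hz]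
    exact (hAL _ (neg_mem (hτ f hf)) a).mpr ha
  · rintro ⟨g', b⟩ ⟨hg', hb, hgb⟩
    simp only at hgb
    obtain ⟨g, hg, rfl⟩ := Finset.mem_image.mp hg'
    have hb' : b + (τ g - g) ∈ A := (hAL _ (hτ g hg) b).mpr hb
    have hkey : (g, b + (τ g - g)) = (f, a) :=
      huniq (g, b + (τ g - g)) ⟨hg, hb', by simp only; rw [← hgb]; abel⟩
    have h1 : g = f := congrArg Prod.fst hkey
    subst h1
    have hb2 : b = z - τ g := by rw [← hgb]; abel
    rw [Prod.mk.injEq]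
    exact ⟨rfl, hb2⟩

lemma span_ne_top (hd : 0 < d) {T : Finset (Fin d → ℚ)} (h : T.card ≤ d - 1) :
    Submodule.span ℚ (T : Set (Fin d → ℚ)) ≠ ⊤ := by
  intro htop
  have h1 : Module.finrank ℚ (Fin d → ℚ) = d := by
    rw [Module.finrank_pi]; simp
  have h2 : Module.finrank ℚ (Submodule.span ℚ (T : Set (Fin d → ℚ))) ≤ T.card :=
    finrank_span_finset_le_card T
  rw [htop] at h2
  have h3 : Module.finrank ℚ (⊤ : Submodule ℚ (Fin d → ℚ)) = d := by
    rw [finrank_top, h1]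
  omega

/-- the `k`-th standard basis vector of `ℚ^d`. -/
def e (k : Fin d) : Fin d → ℚ := fun j => if k = j then 1 else 0

lemma dual_eq_sum (φ : (Fin d → ℚ) →ₗ[ℚ] ℚ) (y : Fin d → ℚ) :
    φ y = ∑ k, y k * φ (e k) := by
  rw [LinearMap.pi_apply_eq_sum_univ φ y]
  exact Finset.sum_congr rfl fun k _ => by rw [smul_eq_mul]; rfl

lemma exists_avoid (hd : 0 < d) (L : AddSubgroup (Fin d → ℤ)) (hL : L.FiniteIndex)
    (f : Fin d → ℤ) (B : Finset (Submodule ℚ (Fin d → ℚ)))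
    (hB : ∀ U ∈ B, U ≠ ⊤) (P : Finset (Fin d → ℤ)) :
    ∃ x : Fin d → ℤ, x - f ∈ L ∧ x ∉ P ∧ ∀ U ∈ B, ι x ∉ U := by
  classical
  set m : ℕ := L.index with hm
  have hm0 : m ≠ 0 := hL.index_ne_zero
  set X : ℤ → (Fin d → ℤ) :=
    fun s => f + fun k : Fin d => (m : ℤ) * s ^ (k.val + 1) with hX
  have hXcoord : ∀ (s : ℤ) (k : Fin d), X s k = f k + (m : ℤ) * s ^ (k.val + 1) :=
    fun s k => rfl
  have hXL : ∀ s, X s - f ∈ L := by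
    intro s
    have h1 : X s - f = m • (fun k : Fin d => s ^ (k.val + 1)) := by
      funext k
      simp only [Pi.sub_apply, hXcoord, Pi.smul_apply, smul_eq_mul, nsmul_eq_mul]
      ring
    rw [h1]; exact AddSubgroup.nsmul_index_mem L _
  have hXinj : Function.Injective X := by
    intro s t hst
    have h0 := congrFun hst ⟨0, hd⟩
    rw [hXcoord, hXcoord] at h0
    have h1 : (m : ℤ) * s ^ (0 + 1) = (m : ℤ) * t ^ (0 + 1) := add_left_cancel h0
    have hm' : (m : ℤ) ≠ 0 := Int.natCast_ne_zero.mpr hm0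
    have h2 := mul_left_cancel₀ hm' h1
    simpa using h2
  have hUbad : ∀ U ∈ B, {s : ℤ | ι (X s) ∈ U}.Finite := by
    intro U hU
    obtain ⟨φ, hφ0, hφmap⟩ := Submodule.exists_dual_map_eq_bot_of_lt_top
      (lt_top_iff_ne_top.mpr (hB U hU)) inferInstance
    have hker : ∀ y ∈ U, φ y = 0 := by
      intro y hy
      have h2 : φ y ∈ U.map φ := Submodule.mem_map_of_mem hy
      rwa [hφmap, Submodule.mem_bot] at h2
    set p : Polynomial ℚ := Polynomial.C (φ (ι f)) +
      ∑ k : Fin d, Polynomial.C ((m : ℚ) * φ (e k)) *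
        Polynomial.X ^ (k.val + 1) with hp
    have heval : ∀ s : ℤ, p.eval (s : ℚ) = φ (ι (X s)) := by
      intro s
      rw [dual_eq_sum φ (ι (X s))]
      have h3 : ∀ k : Fin d, (ι (X s)) k = (f k : ℚ) + (m : ℚ) * (s : ℚ) ^ (k.val + 1) := by
        intro k; rw [ι_apply, hXcoord]; push_cast; ring
      simp only [hp, Polynomial.eval_add, Polynomial.eval_C, Polynomial.eval_finset_sum,
        Polynomial.eval_mul, Polynomial.eval_pow, Polynomial.eval_X]
      rw [dual_eq_sum φ (ι f), ← Finset.sum_add_distrib]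
      refine Finset.sum_congr rfl fun k _ => ?_
      rw [h3 k, ι_apply]; ring
    have hk0 : ∃ k : Fin d, φ (e k) ≠ 0 := by
      by_contra hcon
      push_neg at hcon
      refine hφ0 (LinearMap.ext fun y => ?_)
      rw [dual_eq_sum φ y]
      simp [hcon]
    obtain ⟨k0, hk0⟩ := hk0
    have hcoeff : p.coeff (k0.val + 1) = (m : ℚ) * φ (e k0) := by
      simp only [hp, Polynomial.coeff_add, Polynomial.coeff_C, Polynomial.finset_sum_coeff,
        Polynomial.coeff_C_mul, Polynomial.coeff_X_pow]
      rw [if_neg (by omega)]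
      rw [Finset.sum_eq_single k0]
      · simp
      · intro k _ hk
        rw [if_neg (fun h => hk (Fin.val_injective (by omega)))]
        ring
      · simp
    have hp0 : p ≠ 0 := by
      intro h
      rw [h, Polynomial.coeff_zero] at hcoeff
      exact mul_ne_zero (Nat.cast_ne_zero.mpr hm0) hk0 hcoeff.symm
    have hsub : {s : ℤ | ι (X s) ∈ U} ⊆ (fun s : ℤ => (s : ℚ)) ⁻¹' {x | p.IsRoot x} := by
      intro s hs
      simp only [Set.mem_preimage, Set.mem_setOf_eq, Polynomial.IsRoot]
      rw [heval s]
      exact hker _ hs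
    exact Set.Finite.subset
      (Set.Finite.preimage (Int.cast_injective.injOn) (Polynomial.finite_setOf_isRoot hp0)) hsub
  have hPbad : {s : ℤ | X s ∈ P}.Finite := by
    have h4 : {s : ℤ | X s ∈ P} = X ⁻¹' ↑P := rfl
    rw [h4]
    exact Set.Finite.preimage hXinj.injOn P.finite_toSet
  have hbig : ({s : ℤ | X s ∈ P} ∪ ⋃ U ∈ B, {s : ℤ | ι (X s) ∈ U}).Finite :=
    hPbad.union (Set.Finite.biUnion B.finite_toSet hUbad)
  obtain ⟨s, hs⟩ := hbig.infinite_compl.nonempty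
  simp only [Set.mem_compl_iff, Set.mem_union, Set.mem_iUnion, Set.mem_setOf_eq, not_or,
    not_exists] at hs
  exact ⟨X s, hXL s, hs.1, fun U hU => hs.2 U hU⟩

set_option maxHeartbeats 1000000 in
lemma exists_tau (hd : 0 < d) (L : AddSubgroup (Fin d → ℤ)) (hL : L.FiniteIndex)
    (P : Finset (Fin d → ℤ)) (Q : Finset (Fin d → ℤ)) :
    ∃ τ : (Fin d → ℤ) → (Fin d → ℤ), Set.InjOn τ ↑Q ∧ ∀ f ∈ Q,
      τ f - f ∈ L ∧ τ f ≠ 0 ∧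
      ∀ T : Finset (Fin d → ℚ), T.card ≤ d - 1 → ↑T ⊆ ι '' (↑P : Set (Fin d → ℤ)) →
        ι (τ f) ∉ Submodule.span ℚ (T : Set (Fin d → ℚ)) := by
  classical
  induction Q using Finset.induction_on with
  | empty => exact ⟨id, by simp [Set.InjOn], by simp⟩
  | @insert g Q' hgQ' ih =>
    obtain ⟨τ, hinj, hτ⟩ := ih
    set B : Finset (Submodule ℚ (Fin d → ℚ)) :=
      ((P.image ι).powerset.filter (fun T => T.card ≤ d - 1)).image
        (fun T : Finset (Fin d → ℚ) => Submodule.span ℚ (T : Set (Fin d → ℚ))) with hB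
    have hBproper : ∀ U ∈ B, U ≠ ⊤ := by
      intro U hU
      rw [hB, Finset.mem_image] at hU
      obtain ⟨T, hT, rfl⟩ := hU
      rw [Finset.mem_filter] at hT
      exact span_ne_top hd hT.2
    obtain ⟨x, hxL, hxP, hxB⟩ := exists_avoid hd L hL g B hBproper (insert 0 (Q'.image τ))
    have hx0 : x ≠ 0 := by
      intro h; apply hxP; rw [h]; exact Finset.mem_insert_self 0 _
    have hxim : x ∉ Q'.image τ := fun h => hxP (Finset.mem_insert_of_mem h)
    refine ⟨Function.update τ g x, ?_, ?_⟩
    · intro a ha b hb hab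
      simp only [Finset.coe_insert, Set.mem_insert_iff, Finset.mem_coe] at ha hb
      rcases ha with ha | ha <;> rcases hb with hb | hb
      · rw [ha, hb]
      · exfalso
        have hbg : b ≠ g := fun h : b = g => hgQ' (h ▸ hb)
        rw [ha, Function.update_self, Function.update_of_ne hbg] at hab
        exact hxim (hab.symm ▸ Finset.mem_image_of_mem τ hb)
      · exfalso
        have hag : a ≠ g := fun h : a = g => hgQ' (h ▸ ha)
        rw [hb, Function.update_self, Function.update_of_ne hag] at hab
        exact hxim (hab ▸ Finset.mem_image_of_mem τ ha)
      · have hag : a ≠ g := fun h : a = g => hgQ' (h ▸ ha)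
        have hbg : b ≠ g := fun h : b = g => hgQ' (h ▸ hb)
        rw [Function.update_of_ne hag, Function.update_of_ne hbg] at hab
        exact hinj ha hb hab
    · intro f hf
      rcases Finset.mem_insert.mp hf with rfl | hf
      · rw [Function.update_self]
        refine ⟨hxL, hx0, fun T hTcard hTsub => ?_⟩
        have hTmem : Submodule.span ℚ (T : Set (Fin d → ℚ)) ∈ B := by
          rw [hB]
          refine Finset.mem_image_of_mem _ (Finset.mem_filter.mpr ⟨Finset.mem_powerset.mpr ?_, hTcard⟩)
          intro t ht
          have h2 := hTsub ht
          rwa [← Finset.coe_image, Finset.mem_coe] at h2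
        exact hxB _ hTmem
      · rw [Function.update_of_ne (fun h : f = g => hgQ' (h ▸ hf))]
        exact hτ f hf

lemma exists_sigma (hd : 0 < d) (L : AddSubgroup (Fin d → ℤ)) (hL : L.FiniteIndex)
    (Fs : Finset (Fin d → ℤ)) (t : ℕ) :
    ∃ σ : ℕ → (Fin d → ℤ) → (Fin d → ℤ),
      ∀ j < t,
        Set.InjOn (σ j) ↑Fs ∧
        (∀ f ∈ Fs, σ j f - f ∈ L ∧ σ j f ≠ 0) ∧
        (∀ f ∈ Fs, ∀ T : Finset (Fin d → ℚ), T.card ≤ d - 1 →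
          (↑T ⊆ ι '' ((↑Fs : Set (Fin d → ℤ)) ∪ ⋃ i < j, σ i '' ↑Fs)) →
          ι (σ j f) ∉ Submodule.span ℚ (T : Set (Fin d → ℚ))) := by
  classical
  induction t with
  | zero => exact ⟨fun _ => id, fun j hj => absurd hj (Nat.not_lt_zero j)⟩
  | succ t ih =>
    obtain ⟨σ, hσ⟩ := ih
    set P : Finset (Fin d → ℤ) :=
      Fs ∪ (Finset.range t).biUnion (fun i => Fs.image (σ i)) with hP
    have hPcoe : (↑P : Set (Fin d → ℤ)) = ↑Fs ∪ ⋃ i < t, σ i '' ↑Fs := by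
      rw [hP]
      push_cast [Finset.coe_biUnion, Finset.coe_image]
      simp [Set.ext_iff, Finset.mem_coe, Finset.mem_range]
    obtain ⟨τ, hτinj, hτ⟩ := exists_tau hd L hL P Fs
    refine ⟨fun j => if j = t then τ else σ j, fun j hj => ?_⟩
    have hind : ∀ i < t, (fun j => if j = t then τ else σ j) i = σ i := by
      intro i hi; simp [Nat.ne_of_lt hi]
    by_cases hjt : j = t
    case pos =>
      subst hjt
      simp only [if_pos rfl]
      refine ⟨hτinj, fun f hf => ⟨(hτ f hf).1, (hτ f hf).2.1⟩, ?_⟩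
      intro f hf T hTcard hTsub
      refine (hτ f hf).2.2 T hTcard ?_
      rw [hPcoe]
      have hset : (⋃ i, ⋃ (_ : i < j), (fun k => if k = j then τ else σ k) i '' ↑Fs)
          = ⋃ i, ⋃ (_ : i < j), σ i '' ↑Fs := by
        refine Set.iUnion_congr fun i => Set.iUnion_congr fun hi => ?_
        have h5 := hind i hi
        simp only at h5 ⊢
        rw [h5]
      rwa [hset] at hTsub
    case neg =>
      have hj' : j < t := by omega
      simp only [hjt, if_false]
      refine ⟨(hσ j hj').1, (hσ j hj').2.1, ?_⟩
      intro f hf T hTcard hTsub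
      refine (hσ j hj').2.2 f hf T hTcard ?_
      have hset : (⋃ i, ⋃ (_ : i < j), (fun k => if k = t then τ else σ k) i '' ↑Fs)
          = ⋃ i, ⋃ (_ : i < j), σ i '' ↑Fs := by
        refine Set.iUnion_congr fun i => Set.iUnion_congr fun hi => ?_
        have h5 := hind i (hi.trans hj')
        simp only at h5 ⊢
        rw [h5]
      rwa [hset] at hTsub

end Stmt18

theorem stmt_18 (d : ℕ) (F : Finset (Fin d → ℤ))
    (h0 : (0 : Fin d → ℤ) ∈ F) (hne : F ≠ {0})
    (A : Set (Fin d → ℤ)) (htile : Tiles F A)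
    (L : AddSubgroup (Fin d → ℤ)) (hL : L.FiniteIndex)
    (hAL : ∀ v ∈ L, ∀ a : Fin d → ℤ, a + v ∈ A ↔ a ∈ A) :
    ∃ F' : Fin (d - 1) → Finset (Fin d → ℤ),
      (∀ j, (0 : Fin d → ℤ) ∈ F' j) ∧
      (∀ j, Tiles (F' j) A) ∧
      (∀ (v : Fin (d - 1) → (Fin d → ℤ)) (w : Fin d → ℤ),
        (∀ j, v j ∈ F' j ∧ v j ≠ 0) → w ∈ F → w ≠ 0 →
        ∀ (n : Fin (d - 1) → ℤ) (c : ℤ),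
          ((∑ j, n j • v j) + c • w = 0) → (∀ j, n j = 0) ∧ c = 0) := by
  classical
  rcases Nat.eq_zero_or_pos d with hd0 | hd
  · subst hd0
    exfalso
    apply hne
    apply Finset.eq_singleton_iff_unique_mem.mpr
    exact ⟨h0, fun x _ => funext fun i => i.elim0⟩
  set Fs : Finset (Fin d → ℤ) := F.erase 0 with hFs
  obtain ⟨σ, hσ⟩ := Stmt18.exists_sigma hd L hL Fs (d - 1)
  set τ' : Fin (d - 1) → (Fin d → ℤ) → (Fin d → ℤ) :=
    fun j g => if g = 0 then 0 else σ j.val g with hτ'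
  have hτ'L : ∀ j : Fin (d - 1), ∀ f ∈ F, τ' j f - f ∈ L := by
    intro j f hf
    by_cases hf0 : f = 0
    · have h1 : τ' j f - f = 0 := by simp [hτ', hf0]
      rw [h1]; exact zero_mem L
    · have hfFs : f ∈ Fs := Finset.mem_erase.mpr ⟨hf0, hf⟩
      simp only [hτ', if_neg hf0]
      exact ((hσ j.val j.isLt).2.1 f hfFs).1
  refine ⟨fun j => F.image (τ' j), ?_, ?_, ?_⟩
  · intro j
    have : τ' j 0 = 0 := by simp [hτ']
    exact this ▸ Finset.mem_image_of_mem (τ' j) h0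
  · intro j
    exact Stmt18.tiles_image hAL htile (hτ'L j)
  · intro v w hv hwF hw0 n c heq
    -- decompose v j
    have hvj : ∀ j : Fin (d - 1), ∃ g ∈ Fs, v j = σ j.val g := by
      intro j
      obtain ⟨g, hgF, hτg⟩ := Finset.mem_image.mp (hv j).1
      have hg0 : g ≠ 0 := by
        intro h
        apply (hv j).2
        rw [← hτg, h]
        simp [hτ']
      refine ⟨g, Finset.mem_erase.mpr ⟨hg0, hgF⟩, ?_⟩
      rw [← hτg]
      simp [hτ', if_neg hg0]
    have hwFs : w ∈ Fs := Finset.mem_erase.mpr ⟨hw0, hwF⟩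
    have hQ : ∑ j, n j • Stmt18.ι (v j) + c • Stmt18.ι w = 0 := by
      have h1 := congrArg Stmt18.ι heq
      rw [map_add, map_sum, map_zero] at h1
      simp only [map_zsmul] at h1
      exact h1
    have hkey : ∀ j, n j = 0 := by
      by_contra hcon
      push_neg at hcon
      obtain ⟨j1, hj1⟩ := hcon
      set S : Finset (Fin (d - 1)) := Finset.univ.filter (fun j => n j ≠ 0) with hS
      have hSne : S.Nonempty := ⟨j1, Finset.mem_filter.mpr ⟨Finset.mem_univ _, hj1⟩⟩
      set j0 := S.max' hSne with hj0def
      have hj0 : n j0 ≠ 0 := (Finset.mem_filter.mp (S.max'_mem hSne)).2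
      have hmax : ∀ j, n j ≠ 0 → j ≤ j0 := fun j hj =>
        S.le_max' j (Finset.mem_filter.mpr ⟨Finset.mem_univ _, hj⟩)
      set T : Finset (Fin d → ℚ) :=
        (Finset.Iio j0).image (fun j => Stmt18.ι (v j)) ∪ {Stmt18.ι w} with hT
      have hTcard : T.card ≤ d - 1 := by
        have h2 := Finset.card_union_le ((Finset.Iio j0).image (fun j => Stmt18.ι (v j)))
          ({Stmt18.ι w} : Finset (Fin d → ℚ))
        have h3 := Finset.card_image_le (s := Finset.Iio j0) (f := fun j => Stmt18.ι (v j))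
        rw [Fin.card_Iio] at h3
        have h4 : (j0 : ℕ) < d - 1 := j0.isLt
        simp only [Finset.card_singleton] at h2
        rw [hT]
        omega
      -- membership of n j0 • ι (v j0) in span
      have hQ' : n j0 • Stmt18.ι (v j0) +
          ((∑ j ∈ Finset.univ.erase j0, n j • Stmt18.ι (v j)) + c • Stmt18.ι w) = 0 := by
        rw [← add_assoc,
          Finset.add_sum_erase Finset.univ (fun j => n j • Stmt18.ι (v j)) (Finset.mem_univ j0)]
        exact hQ
      have hsplit := eq_neg_of_add_eq_zero_left hQ'
      have hmem : n j0 • Stmt18.ι (v j0) ∈ Submodule.span ℚ (T : Set (Fin d → ℚ)) := by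
        rw [hsplit]
        refine neg_mem (add_mem (Submodule.sum_mem _ fun j hj => ?_) ?_)
        · by_cases hnj : n j = 0
          · rw [hnj, zero_smul]; exact zero_mem _
          · have hjlt : j < j0 :=
              lt_of_le_of_ne (hmax j hnj) (Finset.ne_of_mem_erase hj)
            refine zsmul_mem (Submodule.subset_span ?_) _
            rw [hT]
            push_cast
            left
            exact ⟨j, hjlt, rfl⟩
        · refine zsmul_mem (Submodule.subset_span ?_) _
          rw [hT]
          push_cast
          right
          rfl
      have hspan : Stmt18.ι (v j0) ∈ Submodule.span ℚ (T : Set (Fin d → ℚ)) := by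
        have h2 : ((n j0 : ℚ)) • Stmt18.ι (v j0) ∈ Submodule.span ℚ (T : Set (Fin d → ℚ)) := by
          rw [Int.cast_smul_eq_zsmul]; exact hmem
        have h3 := Submodule.smul_mem _ ((n j0 : ℚ)⁻¹) h2
        rwa [smul_smul, inv_mul_cancel₀ (Int.cast_ne_zero.mpr hj0), one_smul] at h3
      -- contradiction with construction
      obtain ⟨g0, hg0Fs, hg0⟩ := hvj j0
      have hTsub : (↑T : Set (Fin d → ℚ)) ⊆
          Stmt18.ι '' ((↑Fs : Set (Fin d → ℤ)) ∪ ⋃ i < (j0 : ℕ), σ i '' ↑Fs) := by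
        intro t ht
        rw [hT] at ht
        push_cast at ht
        rcases ht with ⟨j, hjlt, rfl⟩ | ht
        · obtain ⟨g, hgFs, hg⟩ := hvj j
          refine ⟨v j, ?_, rfl⟩
          right
          have hjlt' : j < j0 := hjlt
          exact Set.mem_iUnion.mpr ⟨j.val, Set.mem_iUnion.mpr ⟨hjlt', ⟨g, hgFs, hg.symm⟩⟩⟩
        · rw [ht]
          exact ⟨w, Or.inl hwFs, rfl⟩
      have := (hσ j0.val j0.isLt).2.2 g0 hg0Fs T hTcard hTsub
      rw [← hg0] at this
      exact this hspan
    refine ⟨hkey, ?_⟩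
    have hcw : c • w = 0 := by
      have h1 : ∑ j, n j • v j = 0 := by
        refine Finset.sum_eq_zero fun j _ => ?_
        rw [hkey j, zero_smul]
      rw [h1, zero_add] at heq
      exact heq
    obtain ⟨i, hi⟩ := Function.ne_iff.mp hw0
    have h2 : c * w i = 0 := congrFun hcw i
    rcases mul_eq_zero.mp h2 with h3 | h3
    · exact h3
    · exact absurd h3 hi
end
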